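/- For arbitrary scalars p and q, the skew-symmetric bilinear map φ_5(p,q) on h_2 defined by φ_5(e_1,e_3) = p e_1, φ_5(e_2,e_3) = e_1 + q e_2 + e_4, φ_5(e_3,e_4) = −p e_4, φ_5(e_3,e_5) = −(p+q)e_5, and zero otherwise, is a 2-cocycle of h_2 with adjoint coefficients, and the deformed bracket [x,y]_t = [x,y] + t φ_5(p,q)(x,y) satisfies the Jacobi identity for every t. -/

import Mathlib

noncomputable section

/-- The underlying space of the 5-dimensional Heisenberg Lie algebra `h₂`. -/
abbrev V : Type := Fin 5 → ℝ

/-- Basis vectors: `e 0, …, e 4` are `e₁, …, e₅`. -/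
def e (i : Fin 5) : V := Pi.single i 1

/-- The Heisenberg bracket on `h₂`: `[e₁,e₃] = e₅`, `[e₂,e₄] = e₅`. -/
def br (x y : V) : V :=
  (x 0 * y 2 - x 2 * y 0 + x 1 * y 3 - x 3 * y 1) • e 4

/-- The deformed bracket `[x,y]_t = [x,y] + t • φ x y`. -/
def brt (t : ℝ) (φ : V → V → V) (x y : V) : V := br x y + t • φ x y

/-- The Chevalley–Eilenberg 2-cocycle condition (adjoint coefficients) for a
skew-symmetric 2-cochain `φ` on `h₂`. -/
def IsCocycle (φ : V → V → V) : Prop :=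
  ∀ x y z : V,
    φ (br x y) z - φ (br x z) y + φ (br y z) x
      - br x (φ y z) + br y (φ x z) - br z (φ x y) = 0

/-- `φ₅(p,q)`: `(e₁,e₃) ↦ p e₁`, `(e₂,e₃) ↦ e₁ + q e₂ + e₄`, `(e₃,e₄) ↦ −p e₄`, `(e₃,e₅) ↦ −(p+q)e₅`, zero otherwise. -/
def phi5 (p q : ℝ) (x y : V) : V :=
  (x 0 * y 2 - x 2 * y 0) • (p • e 0)
  + (x 1 * y 2 - x 2 * y 1) • (e 0 + q • e 1 + e 3)
  + (x 2 * y 3 - x 3 * y 2) • ((-p) • e 3)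
  + (x 2 * y 4 - x 4 * y 2) • ((-(p + q)) • e 4)

/-! For skew maps linear in the second argument, the Jacobiator of `b + t • φ` is
`J_b - t • δφ + t² • J_φ`, where `δφ = 0` is the cocycle condition. The bracket of `h₂` is
`ω(x,y) e₅` with `ω(·, e₅) = 0`, so `J_br` vanishes term by term. The cochain `φ₅(p,q)` has the
shape `φ(x,y) = y₃ L x - x₃ L y` for a linear map `L` whose image has zero third coordinate; such a
`φ` is itself a Lie bracket, so `J_φ = 0`. Only `δφ₅ = 0` is a direct computation. -/

section Jacobiator

variable {R M : Type*} [CommRing R] [AddCommGroup M] [Module R M]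

def jacobiator (b : M → M → M) (x y z : M) : M :=
  b x (b y z) + b y (b z x) + b z (b x y)

theorem jacobiator_add_smul {b φ : M → M → M} (hb : ∀ x, IsLinearMap R (b x))
    (hφ : ∀ x, IsLinearMap R (φ x)) (hb_swap : ∀ x y, b y x = -b x y)
    (hφ_swap : ∀ x y, φ y x = -φ x y) (t : R) (x y z : M) :
    jacobiator (fun x y => b x y + t • φ x y) x y z =
      jacobiator b x y z
        - t • (φ (b x y) z - φ (b x z) y + φ (b y z) x - b x (φ y z) + b y (φ x z) - b z (φ x y))
        + t ^ 2 • jacobiator φ x y z := by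
  rw [hφ_swap z (b x y), hφ_swap y (b x z), hφ_swap x (b y z), hb_swap z x, hφ_swap z x,
    (hφ y).map_neg, (hb y).map_neg]
  simp only [jacobiator, (hb _).map_add, (hb _).map_smul, (hφ _).map_add, (hφ _).map_smul]
  module

theorem jacobiator_smul_eq_zero (ω : M →ₗ[R] M →ₗ[R] R) {c : M} (hc : ∀ x, ω x c = 0)
    (x y z : M) : jacobiator (fun x y => ω x y • c) x y z = 0 := by
  simp [jacobiator, hc]

theorem jacobiator_smul_sub_smul_eq_zero (f : M →ₗ[R] R) (L : M →ₗ[R] M)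
    (hfL : ∀ x, f (L x) = 0) (x y z : M) :
    jacobiator (fun x y => f y • L x - f x • L y) x y z = 0 := by
  simp only [jacobiator, map_sub, map_smul, hfL, smul_eq_mul, mul_zero, sub_zero, zero_smul,
    zero_sub]
  module

end Jacobiator

def heisForm : V →ₗ[ℝ] V →ₗ[ℝ] ℝ :=
  LinearMap.mk₂ ℝ (fun x y => x 0 * y 2 - x 2 * y 0 + x 1 * y 3 - x 3 * y 1)
    (fun _ _ _ => by simp only [Pi.add_apply]; ring)
    (fun _ _ _ => by simp only [Pi.smul_apply, smul_eq_mul]; ring)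
    (fun _ _ _ => by simp only [Pi.add_apply]; ring)
    (fun _ _ _ => by simp only [Pi.smul_apply, smul_eq_mul]; ring)

theorem br_eq_heisForm_smul : br = fun x y => heisForm x y • e 4 := rfl

theorem heisForm_apply_e_four (x : V) : heisForm x (e 4) = 0 := by
  simp [heisForm, e]

theorem br_isLinearMap (x : V) : IsLinearMap ℝ (br x) :=
  ((heisForm x).smulRight (e 4)).isLinear

theorem br_swap (x y : V) : br y x = -br x y := by
  rw [br, br, ← neg_smul]
  congr 1
  ring

theorem jacobiator_br (x y z : V) : jacobiator br x y z = 0 := by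
  rw [br_eq_heisForm_smul]
  exact jacobiator_smul_eq_zero heisForm heisForm_apply_e_four x y z

def phi5Op (p q : ℝ) : V →ₗ[ℝ] V :=
  (LinearMap.proj 0).smulRight (p • e 0) + (LinearMap.proj 1).smulRight (e 0 + q • e 1 + e 3)
    + (LinearMap.proj 3).smulRight (p • e 3) + (LinearMap.proj 4).smulRight ((p + q) • e 4)

theorem phi5_eq (p q : ℝ) :
    phi5 p q = fun x y => y 2 • phi5Op p q x - x 2 • phi5Op p q y := by
  funext x y
  simp only [phi5, phi5Op, LinearMap.add_apply, LinearMap.smulRight_apply, LinearMap.proj_apply]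
  module

theorem phi5Op_apply_two (p q : ℝ) (x : V) : phi5Op p q x 2 = 0 := by
  simp [phi5Op, e]

theorem phi5_isLinearMap (p q : ℝ) (x : V) : IsLinearMap ℝ (phi5 p q x) := by
  rw [phi5_eq]
  exact ((LinearMap.proj 2).smulRight (phi5Op p q x) - x 2 • phi5Op p q).isLinear

theorem phi5_swap (p q : ℝ) (x y : V) : phi5 p q y x = -phi5 p q x y := by
  rw [phi5_eq, neg_sub]

theorem jacobiator_phi5 (p q : ℝ) (x y z : V) : jacobiator (phi5 p q) x y z = 0 := by
  rw [phi5_eq]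
  exact jacobiator_smul_sub_smul_eq_zero (LinearMap.proj 2) (phi5Op p q) (phi5Op_apply_two p q) x y z

theorem isCocycle_phi5 (p q : ℝ) : IsCocycle (phi5 p q) := by
  intro x y z
  simp only [phi5, br, e, Pi.add_apply, Pi.smul_apply, smul_eq_mul, Pi.single_apply,
    Fin.reduceEq, if_true, if_false]
  module

/-- For arbitrary scalars `p, q`, `φ₅(p,q)` is a 2-cocycle of `h₂`, and the
deformed bracket `[x,y]_t = [x,y] + t φ₅(p,q)(x,y)` satisfies the Jacobi
identity for every `t`. -/
theorem phi5_cocycle_and_jacobi (p q : ℝ) :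
    IsCocycle (phi5 p q) ∧
      ∀ (t : ℝ) (x y z : V),
        brt t (phi5 p q) x (brt t (phi5 p q) y z)
          + brt t (phi5 p q) y (brt t (phi5 p q) z x)
          + brt t (phi5 p q) z (brt t (phi5 p q) x y) = 0 := by
  refine ⟨isCocycle_phi5 p q, fun t x y z => ?_⟩
  change jacobiator (fun x y => br x y + t • phi5 p q x y) x y z = 0
  rw [jacobiator_add_smul br_isLinearMap (phi5_isLinearMap p q) br_swap (phi5_swap p q),
    jacobiator_br, jacobiator_phi5, isCocycle_phi5 p q x y z]
  simp

end
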